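/- arXiv:2601.19032 — 2 statements merged into one kernel-verified Lean document; each statement's English description precedes it below -/
import Mathlib

section
/- Let f ∈ ℓ¹(ℤ) with frequency function r_n = min{r ∈ ℕ : Mf(n) = A_r f(n)}. Then for every ε > 0, the set { n ∈ ℤ : r_n/|n| ∉ [0, ε) ∪ (1-ε, 1+ε) } is finite. -/
open scoped BigOperators

noncomputable def discAvg (f : ℤ → ℝ) (r : ℕ) (n : ℤ) : ℝ :=
  (∑ j ∈ Finset.Icc (-(r : ℤ)) (r : ℤ), |f (n + j)|) / (2 * r + 1)

noncomputable def discMax (f : ℤ → ℝ) (n : ℤ) : ℝ := ⨆ r : ℕ, discAvg f r n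

noncomputable def discFreq (f : ℤ → ℝ) (n : ℤ) : ℕ :=
  sInf {r : ℕ | discMax f n = discAvg f r n}

lemma sum_window (f : ℤ → ℝ) (r : ℕ) (n : ℤ) :
    ∑ j ∈ Finset.Icc (-(r:ℤ)) (r:ℤ), |f (n + j)| = ∑ m ∈ Finset.Icc (n - r) (n + r), |f m| := by
  rw [show n - (r:ℤ) = n + -(r:ℤ) by ring, ← Finset.map_add_left_Icc, Finset.sum_map]
  rfl

lemma avg_upper (f : ℤ → ℝ) (hf : Summable fun n => |f n|) (r : ℕ) (n : ℤ) :
    discAvg f r n ≤ (∑' m, |f m|) / (2 * r + 1) := by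
  unfold discAvg
  gcongr
  rw [sum_window]
  exact Summable.sum_le_tsum _ (fun i _ => abs_nonneg _) hf

lemma avg_bdd (f : ℤ → ℝ) (hf : Summable fun n => |f n|) (n : ℤ) :
    BddAbove (Set.range fun r => discAvg f r n) := by
  refine ⟨∑' m, |f m|, fun x hx => ?_⟩
  obtain ⟨r, rfl⟩ := hx
  refine (avg_upper f hf r n).trans ?_
  have h0 : (0:ℝ) ≤ ∑' m, |f m| := tsum_nonneg fun i => abs_nonneg _
  have h1 : (1:ℝ) ≤ 2 * r + 1 := by
    have : (0:ℝ) ≤ (r:ℝ) := Nat.cast_nonneg r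
    linarith
  calc (∑' m, |f m|) / (2*r+1) ≤ (∑' m, |f m|)/1 := by gcongr
    _ = _ := by rw [div_one]

lemma key_mid (ε S a : ℝ) (hε : 0 < ε) (hε4 : ε ≤ 1/4) (hS : 0 < S) (ha : 0 < a) :
    ε*S/4 * ((2+ε)*a) < (S - ε*S/4) * (2*(ε*a)) := by
  have t : 0 < ε*S*a := by positivity
  nlinarith [mul_le_mul_of_nonneg_left hε4 t.le]

lemma key_far (ε S a : ℝ) (hε : 0 < ε) (hε4 : ε ≤ 1/4) (hS : 0 < S) (ha : 0 < a) :
    S*((2+ε)*a) ≤ (S - ε*S/4)*(2*((1+ε)*a)) := by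
  nlinarith [mul_nonneg (mul_pos hS ha).le (mul_nonneg hε.le (by linarith : (0:ℝ) ≤ 1-ε))]

theorem stmt5_aux (f : ℤ → ℝ) (hf : Summable fun n => |f n|) (ε : ℝ) (hε : 0 < ε)
    (hε4 : ε ≤ 1/4) :
    {n : ℤ | (discFreq f n : ℝ) / |(n : ℝ)| ∉
      Set.Ico (0 : ℝ) ε ∪ Set.Ioo (1 - ε) (1 + ε)}.Finite := by
  set S := ∑' m, |f m| with hSdef
  have hS0 : 0 ≤ S := tsum_nonneg fun i => abs_nonneg _
  rcases eq_or_lt_of_le hS0 with hS0' | hSpos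
  · -- f ≡ 0, set is empty
    have hf0 : ∀ m, f m = 0 := by
      intro m
      have h1 : |f m| ≤ S := Summable.le_tsum hf m (fun j _ => abs_nonneg _)
      have h2 := abs_nonneg (f m)
      rw [abs_eq_zero.mp (le_antisymm (h1.trans_eq hS0'.symm) h2)]
    have heq : ∀ n, discFreq f n = 0 := by
      intro n
      have : discMax f n = discAvg f 0 n := by
        simp [discMax, discAvg, hf0]
      unfold discFreq
      exact Nat.sInf_eq_zero.mpr (Or.inl this)
    have : {n : ℤ | (discFreq f n : ℝ) / |(n : ℝ)| ∉
        Set.Ico (0 : ℝ) ε ∪ Set.Ioo (1 - ε) (1 + ε)} = ∅ := by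
      ext n
      simp [heq n, Set.mem_Ico, hε, le_refl]
    rw [this]; exact Set.finite_empty
  -- main case
  set δ := ε * S / 4 with hδdef
  have hδ : 0 < δ := by positivity
  obtain ⟨t₀, ht₀⟩ := Filter.eventually_atTop.mp
    (hf.hasSum.eventually (lt_mem_nhds (show S - δ < S by linarith)))
  set N := t₀.sup (fun m => m.natAbs) with hNdef
  set B := ∑ m ∈ Finset.Icc (-(N:ℤ)) (N:ℤ), |f m| with hBdef
  have hB : S - δ < B := by
    apply ht₀
    intro m hm
    have : m.natAbs ≤ N := Finset.le_sup hm
    simp only [Finset.mem_Icc]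
    omega
  have hBS : B ≤ S := Summable.sum_le_tsum _ (fun i _ => abs_nonneg _) hf
  have htail : ∀ W : Finset ℤ, Disjoint W (Finset.Icc (-(N:ℤ)) (N:ℤ)) →
      ∑ m ∈ W, |f m| ≤ S - B := by
    intro W hd
    have := Summable.sum_le_tsum (W ∪ Finset.Icc (-(N:ℤ)) (N:ℤ)) (fun i _ => abs_nonneg _) hf
    rw [Finset.sum_union hd] at this
    linarith
  obtain ⟨M, hM⟩ := exists_nat_gt ((2*N+2)/ε)
  have hMε : 2*(N:ℝ)+2 < ε * M := by
    rw [div_lt_iff₀ hε] at hM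
    linarith
  refine Set.Finite.subset (Set.finite_Icc (-(M:ℤ)) (M:ℤ)) ?_
  intro n hn
  simp only [Set.mem_setOf_eq, Set.mem_union, Set.mem_Ico, Set.mem_Ioo] at hn
  push_neg at hn
  obtain ⟨hn1, hn2⟩ := hn
  by_contra hnM
  simp only [Set.mem_Icc, not_and_or, not_le] at hnM
  -- |n| > M
  have haM : (M:ℝ) < (n.natAbs : ℝ) := by
    have : (M:ℤ) < (n.natAbs : ℤ) := by omega
    exact_mod_cast this
  set a : ℝ := (n.natAbs : ℝ) with hadef
  have hacast : |(n:ℝ)| = a := by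
    rw [hadef, Nat.cast_natAbs]
    exact (Int.cast_abs).symm
  have ha0 : 0 < a := lt_of_le_of_lt (Nat.cast_nonneg M) haM
  have hεa : 2*(N:ℝ)+2 < ε * a := by
    calc 2*(N:ℝ)+2 < ε * M := hMε
      _ ≤ ε * a := by nlinarith
  set r : ℕ := discFreq f n with hrdef
  -- ε * a ≤ r
  have hr0 : (0:ℝ) ≤ (r:ℝ) / a := by positivity
  rw [hacast] at hn1 hn2
  have hεr : ε * a ≤ (r:ℝ) := by
    have := hn1 hr0
    rw [le_div_iff₀ ha0] at this
    linarith
  have hrpos : r ≠ 0 := by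
    intro h
    rw [h] at hεr
    simp at hεr
    nlinarith
  have hne : {s : ℕ | discMax f n = discAvg f s n}.Nonempty := by
    by_contra h
    rw [Set.not_nonempty_iff_eq_empty] at h
    apply hrpos
    rw [hrdef, discFreq, h, Nat.sInf_empty]
  have hmem : discMax f n = discAvg f r n := Nat.sInf_mem hne
  set r' : ℕ := n.natAbs + N with hr'def
  have hup : discAvg f r' n ≤ discAvg f r n := by
    rw [← hmem]
    exact le_ciSup (avg_bdd f hf n) r'
  -- lower bound for discAvg f r' n
  have hlow : B / (2*(a+N)+1) ≤ discAvg f r' n := by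
    rw [discAvg, sum_window]
    have hcast : (2 * (r' : ℝ) + 1) = 2*(a+N)+1 := by
      rw [hr'def]; push_cast; ring
    rw [hcast]
    gcongr
    rw [hBdef]
    apply Finset.sum_le_sum_of_subset_of_nonneg
    · intro m hm
      simp only [Finset.mem_Icc] at *
      omega
    · intro _ _ _; exact abs_nonneg _
  -- key: discAvg f r n < B / (2*(a+N)+1) gives contradiction
  have hden : (0:ℝ) < 2*(a+N)+1 := by positivity
  have hrden : (0:ℝ) < 2*(r:ℝ)+1 := by positivity
  clear_value S δ B N a r r'
  suffices hcontra : discAvg f r n < B / (2*(a+N)+1) by linarith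
  have hn2' : (r:ℝ)/a ≤ 1-ε ∨ 1+ε ≤ (r:ℝ)/a := by
    rcases le_or_gt ((r:ℝ)/a) (1-ε) with h|h
    · exact Or.inl h
    · exact Or.inr (hn2 h)
  rcases hn2' with hmid | hfar
  · -- middle: r ≤ (1-ε) a
    have hrle : (r:ℝ) ≤ (1-ε) * a := by
      rw [div_le_iff₀ ha0] at hmid
      linarith
    -- integer: r + N < n.natAbs
    have hint : (r:ℕ) + N < n.natAbs := by
      have h' : (r:ℝ) + N < (n.natAbs : ℝ) := by rw [← hadef]; nlinarith
      exact_mod_cast h'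
    have hdisj : Disjoint (Finset.Icc (n - (r:ℤ)) (n + (r:ℤ))) (Finset.Icc (-(N:ℤ)) (N:ℤ)) := by
      rw [Finset.disjoint_left]
      intro m hm hm'
      simp only [Finset.mem_Icc] at hm hm'
      omega
    have havg : discAvg f r n ≤ (S - B) / (2*(r:ℝ)+1) := by
      rw [discAvg, sum_window]
      gcongr
      exact htail _ hdisj
    refine havg.trans_lt ?_
    rw [div_lt_div_iff₀ hrden hden]
    -- (S-B)(2(a+N)+1) < B(2r+1)
    have hδS : δ < S := by
      have h1 : ε * S ≤ (1/4) * S := mul_le_mul_of_nonneg_right hε4 hS0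
      rw [hδdef]; linarith
    have hl1 : (S - B) * (2*(a+(N:ℝ))+1) ≤ (ε*S/4) * ((2+ε)*a) := by
      apply mul_le_mul (by rw [hδdef] at hB; linarith) (by linarith) (by positivity) (by positivity)
    have hl2 : (ε*S/4) * ((2+ε)*a) < (S - δ) * (2*(ε*a)) := by
      rw [hδdef]; exact key_mid ε S a hε hε4 hSpos ha0
    have hl3 : (S - δ) * (2*(ε*a)) ≤ B * (2*(r:ℝ)+1) := by
      apply mul_le_mul hB.le (by linarith) (by positivity) (by linarith)
    linarith
  · -- far: (1+ε) a ≤ r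
    have hrge : (1+ε) * a ≤ (r:ℝ) := by
      rw [le_div_iff₀ ha0] at hfar
      linarith
    have havg : discAvg f r n ≤ S / (2*(r:ℝ)+1) := by
      rw [hSdef]; exact avg_upper f hf r n
    refine havg.trans_lt ?_
    rw [div_lt_div_iff₀ hrden hden]
    have hδS : δ < S := by
      have h1 : ε * S ≤ (1/4) * S := mul_le_mul_of_nonneg_right hε4 hS0
      rw [hδdef]; linarith
    have hf1 : S*(2*(a+(N:ℝ))+1) < S*((2+ε)*a) := by
      apply mul_lt_mul_of_pos_left (by linarith) hSpos
    have hf2 : S*((2+ε)*a) ≤ (S-δ)*(2*((1+ε)*a)) := by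
      rw [hδdef]; exact key_far ε S a hε hε4 hSpos ha0
    have hf3 : (S-δ)*(2*((1+ε)*a)) ≤ B*(2*(r:ℝ)+1) := by
      apply mul_le_mul hB.le (by linarith) (by positivity) (by linarith)
    linarith

theorem stmt5 (f : ℤ → ℝ) (hf : Summable fun n => |f n|) (ε : ℝ) (hε : 0 < ε) :
    {n : ℤ | (discFreq f n : ℝ) / |(n : ℝ)| ∉
      Set.Ico (0 : ℝ) ε ∪ Set.Ioo (1 - ε) (1 + ε)}.Finite := by
  have hε' : 0 < min ε (1/4) := lt_min hε (by norm_num)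
  refine Set.Finite.subset (stmt5_aux f hf (min ε (1/4)) hε' (min_le_right _ _)) ?_
  intro n hn
  simp only [Set.mem_setOf_eq, Set.mem_union, Set.mem_Ico, Set.mem_Ioo] at *
  push_neg at *
  obtain ⟨h1, h2⟩ := hn
  have hm1 : min ε (1/4) ≤ ε := min_le_left _ _
  constructor
  · intro h0
    have := h1 h0
    linarith [min_le_left ε (1/4)]
  · intro hlo
    have := h2 (by linarith)
    linarith
end

section
/- Let f ∈ L¹(ℝ^d), f ≠ 0, let ε > 0, and choose K > 1 and δ ∈ (0,1) with K < (1-δ)^{1/d}(1+ε). Let R' > 0 satisfy ∫_{B_{R'}(0)} |f| ≥ (1-δ)‖f‖₁ and set M = max{R'/(K-1), R'}. Then for every x with |x| > M and r_x/|x| ≥ ε, one has r_x/|x| ≤ K/(1-δ)^{1/d} < 1+ε. -/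
open MeasureTheory

noncomputable def contAvg (d : ℕ) (f : EuclideanSpace ℝ (Fin d) → ℝ) (r : ℝ)
    (x : EuclideanSpace ℝ (Fin d)) : ℝ :=
  (∫ y in Metric.ball x r, |f y|) / (volume (Metric.ball x r)).toReal

noncomputable def contMax (d : ℕ) (f : EuclideanSpace ℝ (Fin d) → ℝ)
    (x : EuclideanSpace ℝ (Fin d)) : ℝ :=
  sSup ((fun r => contAvg d f r x) '' Set.Ioi (0 : ℝ))

noncomputable def contFreq (d : ℕ) (f : EuclideanSpace ℝ (Fin d) → ℝ)
    (x : EuclideanSpace ℝ (Fin d)) : ℝ :=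
  sInf {r : ℝ | 0 < r ∧ contMax d f x = contAvg d f r x}

/-!
If `r` is a maximizing radius at `x` and `B_R(x)` carries a fraction `c` of the mass of `f`,
then `c ‖f‖₁ / R^d ≤ A_R f(x) ≤ A_r f(x) ≤ ‖f‖₁ / r^d`, so `r ≤ R / c^{1/d}`. Taking
`R = ‖x‖ + R'`, the ball `B_R(x)` contains `B_{R'}(0)`, and `‖x‖ > R'/(K-1)` gives `R ≤ K ‖x‖`.
-/

open Metric

section

variable {α : Type*} [MeasurableSpace α] {μ : Measure α} {g : α → ℝ}

theorem integral_abs_pos_of_not_ae_eq_zero (hg : Integrable g μ) (hg0 : ¬ g =ᵐ[μ] 0) :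
    0 < ∫ y, |g y| ∂μ := by
  refine (integral_nonneg fun y => abs_nonneg (g y)).lt_of_ne fun h => hg0 ?_
  filter_upwards [(integral_eq_zero_iff_of_nonneg (fun y => abs_nonneg (g y)) hg.abs).mp h.symm]
    with y hy
  simpa using hy

theorem setIntegral_abs_le_setIntegral_abs_of_subset (hg : Integrable g μ) {s t : Set α}
    (hst : s ⊆ t) : ∫ y in s, |g y| ∂μ ≤ ∫ y in t, |g y| ∂μ :=
  setIntegral_mono_set hg.abs.integrableOn (.of_forall fun _ => abs_nonneg _) hst.eventuallyLE

theorem setIntegral_abs_le_integral_abs (hg : Integrable g μ) (s : Set α) :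
    ∫ y in s, |g y| ∂μ ≤ ∫ y, |g y| ∂μ :=
  setIntegral_le_integral hg.abs (.of_forall fun _ => abs_nonneg _)

end

theorem le_div_rpow_one_div_of_mul_pow_le {c r R : ℝ} {d : ℕ} (hd : d ≠ 0) (hc : 0 < c)
    (hR : 0 ≤ R) (h : c * r ^ d ≤ R ^ d) : r ≤ R / c ^ ((1 : ℝ) / d) := by
  rw [le_div_iff₀ (Real.rpow_pos_of_pos hc _)]
  refine le_of_pow_le_pow_left₀ hd hR ?_
  rwa [mul_pow, one_div, Real.rpow_inv_natCast_pow hc.le hd, mul_comm]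

theorem volume_unitBall_toReal_pos (d : ℕ) :
    0 < (volume (ball (0 : EuclideanSpace ℝ (Fin d)) 1)).toReal :=
  ENNReal.toReal_pos (measure_ball_pos volume 0 one_pos).ne' measure_ball_lt_top.ne

variable {d : ℕ} {f : EuclideanSpace ℝ (Fin d) → ℝ} {x : EuclideanSpace ℝ (Fin d)}

theorem contAvg_eq {r : ℝ} (hr : 0 < r) :
    contAvg d f r x = (∫ y in ball x r, |f y|) /
      (r ^ d * (volume (ball (0 : EuclideanSpace ℝ (Fin d)) 1)).toReal) := by
  rw [contAvg, Measure.addHaar_ball_of_pos volume x hr, finrank_euclideanSpace_fin,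
    ENNReal.toReal_mul, ENNReal.toReal_ofReal (by positivity)]

theorem mul_pow_le_pow_of_contAvg_le (hf : Integrable f volume) {c r R : ℝ} (hr : 0 < r)
    (hR : 0 < R) (hI : 0 < ∫ y, |f y|) (hmass : c * ∫ y, |f y| ≤ ∫ y in ball x R, |f y|)
    (havg : contAvg d f R x ≤ contAvg d f r x) : c * r ^ d ≤ R ^ d := by
  have hv := volume_unitBall_toReal_pos d
  rw [contAvg_eq hR, contAvg_eq hr, div_le_div_iff₀ (by positivity) (by positivity)] at havg
  have havg' : (∫ y in ball x R, |f y|) * r ^ d ≤ (∫ y in ball x r, |f y|) * R ^ d :=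
    le_of_mul_le_mul_right (by linarith) hv
  have hr_int := setIntegral_abs_le_integral_abs hf (ball x r)
  refine le_of_mul_le_mul_left ?_ hI
  calc (∫ y, |f y|) * (c * r ^ d) = (c * ∫ y, |f y|) * r ^ d := by ring
    _ ≤ (∫ y in ball x R, |f y|) * r ^ d := by gcongr
    _ ≤ (∫ y in ball x r, |f y|) * R ^ d := havg'
    _ ≤ (∫ y, |f y|) * R ^ d := by gcongr

theorem mul_pow_le_pow_of_contMax_eq_contAvg (hf : Integrable f volume) {c r R : ℝ}
    (hc : 0 < c) (hr : 0 < r) (hR : 0 < R) (hI : 0 < ∫ y, |f y|)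
    (hmass : c * ∫ y, |f y| ≤ ∫ y in ball x R, |f y|)
    (hmax : contMax d f x = contAvg d f r x) : c * r ^ d ≤ R ^ d := by
  by_cases hb : BddAbove ((fun r => contAvg d f r x) '' Set.Ioi (0 : ℝ))
  · exact mul_pow_le_pow_of_contAvg_le hf hr hR hI hmass
      (hmax ▸ le_csSup hb ⟨R, hR, rfl⟩)
  -- Otherwise `contMax` takes the junk value `0`, so `B_r(x)` carries no mass.
  have hr0 : ∫ y in ball x r, |f y| = 0 := by
    have h0 : contAvg d f r x = 0 := hmax ▸ Real.sSup_of_not_bddAbove hb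
    rw [contAvg_eq hr] at h0
    have hv := volume_unitBall_toReal_pos d
    exact (div_eq_zero_iff.mp h0).resolve_right (by positivity)
  have hrR : r < R := by
    by_contra! hRr
    have := setIntegral_abs_le_setIntegral_abs_of_subset hf (ball_subset_ball (x := x) hRr)
    nlinarith
  have hc1 : c ≤ 1 := by
    refine le_of_mul_le_mul_right ?_ hI
    linarith [setIntegral_abs_le_integral_abs hf (ball x R)]
  calc c * r ^ d ≤ 1 * R ^ d := by gcongr
    _ = R ^ d := one_mul _

theorem contFreq_le_of_forall_le {B : ℝ} (hB : 0 ≤ B)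
    (h : ∀ r, 0 < r → contMax d f x = contAvg d f r x → r ≤ B) : contFreq d f x ≤ B := by
  rcases Set.eq_empty_or_nonempty {r : ℝ | 0 < r ∧ contMax d f x = contAvg d f r x}
    with he | ⟨r, hr⟩
  · rwa [contFreq, he, Real.sInf_empty]
  · exact csInf_le_of_le ⟨0, fun y hy => hy.1.le⟩ hr (h r hr.1 hr.2)

theorem stmt9_general (d : ℕ) (f : EuclideanSpace ℝ (Fin d) → ℝ) (hf : Integrable f volume)
    (hf0 : ¬ (f =ᵐ[volume] 0)) (ε K δ : ℝ) (hK : 1 < K)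
    (hδ1 : δ < 1)
    (hKδ : K < (1 - δ) ^ ((1 : ℝ) / d) * (1 + ε))
    (R' : ℝ) (hR' : 0 < R')
    (hmass : (1 - δ) * ∫ y, |f y| ≤
      ∫ y in Metric.ball (0 : EuclideanSpace ℝ (Fin d)) R', |f y|)
    (x : EuclideanSpace ℝ (Fin d)) (hx : max (R' / (K - 1)) R' < ‖x‖) :
    contFreq d f x / ‖x‖ ≤ K / (1 - δ) ^ ((1 : ℝ) / d) ∧
      K / (1 - δ) ^ ((1 : ℝ) / d) < 1 + ε := by
  have hc : 0 < 1 - δ := sub_pos.mpr hδ1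
  have hp : 0 < (1 - δ) ^ ((1 : ℝ) / d) := Real.rpow_pos_of_pos hc _
  refine ⟨?_, (div_lt_iff₀ hp).mpr (by linarith)⟩
  have hx0 : 0 < ‖x‖ := hR'.trans ((le_max_right _ _).trans_lt hx)
  have hd : d ≠ 0 := by
    rintro rfl
    exact hx0.ne' (norm_eq_zero.mpr (Subsingleton.elim x 0))
  have hRx : R' + ‖x‖ ≤ K * ‖x‖ := by
    have := (div_lt_iff₀ (sub_pos.mpr hK)).mp ((le_max_left _ _).trans_lt hx)
    linarith
  have hmassR : (1 - δ) * ∫ y, |f y| ≤ ∫ y in ball x (R' + ‖x‖), |f y| :=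
    hmass.trans (setIntegral_abs_le_setIntegral_abs_of_subset hf
      (ball_subset_ball' (by rw [dist_zero_left])))
  have hfreq : contFreq d f x ≤ (R' + ‖x‖) / (1 - δ) ^ ((1 : ℝ) / d) :=
    contFreq_le_of_forall_le (by positivity) fun r hr hmax =>
      le_div_rpow_one_div_of_mul_pow_le hd hc (by positivity)
        (mul_pow_le_pow_of_contMax_eq_contAvg hf hc hr (by positivity)
          (integral_abs_pos_of_not_ae_eq_zero hf hf0) hmassR hmax)
  rw [div_le_iff₀ hx0, div_mul_eq_mul_div]
  exact hfreq.trans (div_le_div_of_nonneg_right hRx hp.le)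

theorem stmt9 (d : ℕ) (f : EuclideanSpace ℝ (Fin d) → ℝ) (hf : Integrable f volume)
    (hf0 : ¬ (f =ᵐ[volume] 0)) (ε K δ : ℝ) (hε : 0 < ε) (hK : 1 < K)
    (hδ0 : 0 < δ) (hδ1 : δ < 1)
    (hKδ : K < (1 - δ) ^ ((1 : ℝ) / d) * (1 + ε))
    (R' : ℝ) (hR' : 0 < R')
    (hmass : (1 - δ) * ∫ y, |f y| ≤
      ∫ y in Metric.ball (0 : EuclideanSpace ℝ (Fin d)) R', |f y|)
    (x : EuclideanSpace ℝ (Fin d)) (hx : max (R' / (K - 1)) R' < ‖x‖)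
    (hratio : ε ≤ contFreq d f x / ‖x‖) :
    contFreq d f x / ‖x‖ ≤ K / (1 - δ) ^ ((1 : ℝ) / d) ∧
      K / (1 - δ) ^ ((1 : ℝ) / d) < 1 + ε :=
  stmt9_general d f hf hf0 ε K δ hK hδ1 hKδ R' hR' hmass x hx
end
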